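/- arXiv:2509.01685 — 2 statements merged into one kernel-verified Lean document; each statement's English description precedes it below -/
import Mathlib

section
/- Suppose ρ_k = N(μ_k, Σ_k) is a Gaussian on ℝ^d, V(x) = ½ xᵀ Σ^{-1} x with Σ symmetric positive definite, M symmetric positive definite, T > 0, β > 0. Then the measure with density x ↦ ∫ K_M(x,y) ρ_k(y) dy, where K_M(x,y) = exp(-β/2 (V(x) + ‖x-y‖²_M/(2T))) / ∫ exp(-β/2 (V(z) + ‖z-y‖²_M/(2T))) dz, is the Gaussian N(μ̃_k, Σ̃_k) with μ̃_k = (I + T M Σ^{-1})^{-1} μ_k and Σ̃_k = 2β^{-1}T (TΣ^{-1} + M^{-1})^{-1} + (TΣ^{-1} + M^{-1})^{-1} M^{-1} Σ_k M^{-1} (TΣ^{-1} + M^{-1})^{-1}. -/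
/-!
For fixed `y` the exponent of `K_M(·, y)` is a quadratic in `x` with precision
`k (TΣ⁻¹ + M⁻¹)`, `k = β / (2T)`, so after normalisation `K_M(·, y)` is the Gaussian density
`N((TΣ⁻¹ + M⁻¹)⁻¹ M⁻¹ y, 2β⁻¹T (TΣ⁻¹ + M⁻¹)⁻¹)`. The theorem is then the marginal of a
linear-Gaussian model, `∫ N(x; L y, P) N(y; μ, S) dy = N(x; L μ, P + L S Lᵀ)`: completing the
square in `y` leaves a Gaussian integral with precision `R = S⁻¹ + Lᵀ P⁻¹ L`, and the Woodbury
identity and the matrix determinant lemma identify what remains. Gaussian integrals in `ℝ^d` reduce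
to products of one-dimensional ones after the change of variables by a symmetric square root of
the inverse precision.
-/

open Matrix MeasureTheory Real

/-- Density of the multivariate Gaussian `N(m, S)` on `ℝ^d`. -/
noncomputable def gaussPDF {d : ℕ} (m : Fin d → ℝ) (S : Matrix (Fin d) (Fin d) ℝ)
    (x : Fin d → ℝ) : ℝ :=
  (2 * Real.pi) ^ (-(d : ℝ) / 2) * S.det ^ (-(1 : ℝ) / 2) *
    Real.exp (-(1 / 2) * ((x - m) ⬝ᵥ (S⁻¹ *ᵥ (x - m))))

/-- The normalized kernel `K_M(x,y)` for the quadratic potential `V(x) = ½xᵀΣ⁻¹x`. -/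
noncomputable def kerKM {d : ℕ} (S M : Matrix (Fin d) (Fin d) ℝ) (T β : ℝ)
    (x y : Fin d → ℝ) : ℝ :=
  Real.exp (-(β / 2) * ((1 / 2) * (x ⬝ᵥ (S⁻¹ *ᵥ x)) +
      ((x - y) ⬝ᵥ (M⁻¹ *ᵥ (x - y))) / (2 * T))) /
    ∫ z : Fin d → ℝ, Real.exp (-(β / 2) * ((1 / 2) * (z ⬝ᵥ (S⁻¹ *ᵥ z)) +
      ((z - y) ⬝ᵥ (M⁻¹ *ᵥ (z - y))) / (2 * T)))

namespace Matrix

theorem PosDef.isSymm {ι : Type*} {A : Matrix ι ι ℝ} (hA : A.PosDef) : A.IsSymm :=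
  isHermitian_iff_isSymm.mp hA.isHermitian

variable {ι κ : Type*} [Fintype ι] [Fintype κ]

theorem IsSymm.dotProduct_mulVec_comm {A : Matrix ι ι ℝ} (hA : A.IsSymm) (u v : ι → ℝ) :
    u ⬝ᵥ (A *ᵥ v) = (A *ᵥ u) ⬝ᵥ v := by
  rw [dotProduct_mulVec, ← vecMul_transpose, hA.eq]

theorem IsSymm.sub_dotProduct_mulVec_sub {A : Matrix ι ι ℝ} (hA : A.IsSymm) (u w : ι → ℝ) :
    (u - w) ⬝ᵥ (A *ᵥ (u - w)) = u ⬝ᵥ (A *ᵥ u) - 2 * (w ⬝ᵥ (A *ᵥ u)) + w ⬝ᵥ (A *ᵥ w) := by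
  rw [mulVec_sub, sub_dotProduct, dotProduct_sub, dotProduct_sub,
    ← dotProduct_transpose_mulVec A w u, hA.eq]
  ring

theorem mulVec_dotProduct_mulVec_mulVec (A : Matrix ι ι ℝ) (N : Matrix ι κ ℝ) (u v : κ → ℝ) :
    (N *ᵥ u) ⬝ᵥ (A *ᵥ (N *ᵥ v)) = u ⬝ᵥ ((Nᵀ * A * N) *ᵥ v) := by
  rw [← mulVec_mulVec, ← mulVec_mulVec, mulVec_transpose, dotProduct_comm u,
    ← dotProduct_mulVec, dotProduct_comm]

variable [DecidableEq ι] [DecidableEq κ]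

theorem PosDef.neg_half_quadratic_add_linear_eq {Q : Matrix ι ι ℝ} (hQ : Q.PosDef)
    (b x : ι → ℝ) :
    -(1 / 2) * (x ⬝ᵥ (Q *ᵥ x)) + b ⬝ᵥ x =
      -(1 / 2) * ((x - Q⁻¹ *ᵥ b) ⬝ᵥ (Q *ᵥ (x - Q⁻¹ *ᵥ b))) + (1 / 2) * (b ⬝ᵥ (Q⁻¹ *ᵥ b)) := by
  rw [hQ.isSymm.sub_dotProduct_mulVec_sub, hQ.isSymm.dotProduct_mulVec_comm (Q⁻¹ *ᵥ b),
    hQ.isSymm.dotProduct_mulVec_comm (Q⁻¹ *ᵥ b), mulVec_mulVec,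
    mul_nonsing_inv _ hQ.det_pos.ne'.isUnit, one_mulVec, dotProduct_comm b]
  ring

theorem det_add_mul_mul_transpose {P : Matrix ι ι ℝ} {S : Matrix κ κ ℝ} (hP : IsUnit P.det)
    (hS : IsUnit S.det) (L : Matrix ι κ ℝ) :
    (P + L * S * Lᵀ).det = P.det * S.det * (S⁻¹ + Lᵀ * P⁻¹ * L).det := by
  have h : 1 + Lᵀ * P⁻¹ * (L * S) = (S⁻¹ + Lᵀ * P⁻¹ * L) * S := by
    rw [add_mul, nonsing_inv_mul _ hS]
    simp only [Matrix.mul_assoc]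
  rw [det_add_mul _ _ hP, h, det_mul]
  ring

theorem PosDef.inv_add_transpose_mul_inv_mul {P : Matrix ι ι ℝ} {S : Matrix κ κ ℝ}
    (hS : S.PosDef) (hP : P.PosDef) (L : Matrix ι κ ℝ) : (S⁻¹ + Lᵀ * P⁻¹ * L).PosDef := by
  have h := hP.inv.posSemidef.conjTranspose_mul_mul_same L
  rw [conjTranspose_eq_transpose_of_trivial] at h
  rw [add_comm]
  exact PosDef.posSemidef_add h hS.inv

open scoped MatrixOrder in
theorem PosDef.exists_isSymm_mul_self_eq_inv {Q : Matrix ι ι ℝ} (hQ : Q.PosDef) :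
    ∃ N : Matrix ι ι ℝ, N.IsSymm ∧ N * N = Q⁻¹ ∧ N.det = Q.det ^ (-(1 : ℝ) / 2) := by
  refine ⟨CFC.sqrt Q⁻¹, ?_, CFC.sqrt_mul_sqrt_self _ hQ.inv.posSemidef.nonneg, ?_⟩
  · exact isHermitian_iff_isSymm.mp (CFC.sqrt_nonneg _).posSemidef.isHermitian
  · rw [hQ.inv.posSemidef.det_sqrt, det_nonsing_inv, Ring.inverse_eq_inv', RCLike.sqrt_real,
      sqrt_eq_rpow, inv_rpow hQ.det_pos.le, ← rpow_neg hQ.det_pos.le, neg_div]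

end Matrix

section GaussianIntegral

variable {ι : Type*} [Fintype ι]

theorem integral_comp_mulVec [DecidableEq ι] {E : Type*} [NormedAddCommGroup E]
    [NormedSpace ℝ E] {N : Matrix ι ι ℝ} (hN : N.det ≠ 0) (f : (ι → ℝ) → E) :
    ∫ x, f x = |N.det| • ∫ u, f (N *ᵥ u) := by
  have hemb : MeasurableEmbedding (toLin' N) :=
    (toLinearEquiv' N (invertibleOfIsUnitDet N hN.isUnit)).toContinuousLinearEquiv
      |>.toHomeomorph.measurableEmbedding
  have hmap := hemb.integral_map (μ := volume) f
  rw [map_matrix_volume_pi_eq_smul_volume_pi hN, integral_smul_measure] at hmap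
  simp only [toLin'_apply] at hmap
  rw [← hmap, smul_smul, ENNReal.toReal_ofReal (abs_nonneg _), abs_inv,
    mul_inv_cancel₀ (abs_ne_zero.2 hN), one_smul]

theorem integral_exp_neg_half_sq_add_mul (c : ℝ) :
    ∫ v : ℝ, exp (-(1 / 2) * v ^ 2 + c * v) = √(2 * π) * exp (c ^ 2 / 2) := by
  have hsq : ∀ v : ℝ, -(1 / 2) * v ^ 2 + c * v = -(1 / 2) * (v - c) ^ 2 + c ^ 2 / 2 := by
    intro v
    ring
  simp_rw [hsq, exp_add, integral_mul_const]
  rw [integral_sub_right_eq_self (fun v ↦ exp (-(1 / 2) * v ^ 2)) c, integral_gaussian]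
  norm_num [mul_comm]

theorem integral_exp_neg_half_dotProduct_self_add (c : ι → ℝ) :
    ∫ u : ι → ℝ, exp (-(1 / 2) * (u ⬝ᵥ u) + c ⬝ᵥ u) =
      (2 * π) ^ ((Fintype.card ι : ℝ) / 2) * exp ((1 / 2) * (c ⬝ᵥ c)) := by
  have hprod : ∀ u : ι → ℝ, exp (-(1 / 2) * (u ⬝ᵥ u) + c ⬝ᵥ u) =
      ∏ i, exp (-(1 / 2) * u i ^ 2 + c i * u i) := by
    intro u
    simp only [← exp_sum, dotProduct, Finset.mul_sum, ← Finset.sum_add_distrib, sq]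
  simp_rw [hprod]
  rw [integral_fintype_prod_volume_eq_prod (fun i v ↦ exp (-(1 / 2) * v ^ 2 + c i * v))]
  simp_rw [integral_exp_neg_half_sq_add_mul]
  rw [Finset.prod_mul_distrib, Finset.prod_const, ← exp_sum, Finset.card_univ,
    sqrt_eq_rpow, ← rpow_mul_natCast (by positivity)]
  simp only [dotProduct, Finset.mul_sum, sq]
  congr 2
  · ring
  · exact Finset.sum_congr rfl fun i _ ↦ by ring

theorem integral_exp_neg_half_quadratic_add_linear [DecidableEq ι] {Q : Matrix ι ι ℝ}
    (hQ : Q.PosDef) (b : ι → ℝ) :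
    ∫ x, exp (-(1 / 2) * (x ⬝ᵥ (Q *ᵥ x)) + b ⬝ᵥ x) =
      (2 * π) ^ ((Fintype.card ι : ℝ) / 2) * Q.det ^ (-(1 : ℝ) / 2) *
        exp ((1 / 2) * (b ⬝ᵥ (Q⁻¹ *ᵥ b))) := by
  obtain ⟨N, hNsymm, hNN, hNdet⟩ := hQ.exists_isSymm_mul_self_eq_inv
  have hdetN : 0 < N.det := hNdet ▸ rpow_pos_of_pos hQ.det_pos _
  have hNQN : N * Q * N = 1 := by
    have hNinv : N⁻¹ = N * Q :=
      inv_eq_right_inv (by rw [← Matrix.mul_assoc, hNN, nonsing_inv_mul _ hQ.det_pos.ne'.isUnit])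
    rw [← hNinv, nonsing_inv_mul _ hdetN.ne'.isUnit]
  have hwhiten : ∀ u, -(1 / 2) * ((N *ᵥ u) ⬝ᵥ (Q *ᵥ (N *ᵥ u))) + b ⬝ᵥ (N *ᵥ u) =
      -(1 / 2) * (u ⬝ᵥ u) + (N *ᵥ b) ⬝ᵥ u := by
    intro u
    rw [mulVec_dotProduct_mulVec_mulVec, hNsymm.eq, hNQN, one_mulVec,
      hNsymm.dotProduct_mulVec_comm]
  have hNb : (N *ᵥ b) ⬝ᵥ (N *ᵥ b) = b ⬝ᵥ (Q⁻¹ *ᵥ b) := by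
    rw [← hNsymm.dotProduct_mulVec_comm, mulVec_mulVec, hNN]
  rw [integral_comp_mulVec hdetN.ne', abs_of_pos hdetN, hNdet, smul_eq_mul]
  simp_rw [hwhiten]
  rw [integral_exp_neg_half_dotProduct_self_add, hNb]
  ring

end GaussianIntegral

theorem exp_neg_half_quadratic_add_linear_div_integral {d : ℕ} {Q : Matrix (Fin d) (Fin d) ℝ}
    (hQ : Q.PosDef) (b x : Fin d → ℝ) :
    exp (-(1 / 2) * (x ⬝ᵥ (Q *ᵥ x)) + b ⬝ᵥ x) /
        ∫ z, exp (-(1 / 2) * (z ⬝ᵥ (Q *ᵥ z)) + b ⬝ᵥ z) =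
      gaussPDF (Q⁻¹ *ᵥ b) Q⁻¹ x := by
  have hdet := hQ.det_pos
  rw [integral_exp_neg_half_quadratic_add_linear hQ, hQ.neg_half_quadratic_add_linear_eq,
    gaussPDF, nonsing_inv_nonsing_inv _ hdet.ne'.isUnit, det_nonsing_inv, Ring.inverse_eq_inv',
    Fintype.card_fin, exp_add, inv_rpow hdet.le]
  field_simp
  rw [← rpow_add (by positivity), add_neg_cancel, rpow_zero]

theorem gaussPDF_eq_gaussPDF_zero_sub {d : ℕ} (m : Fin d → ℝ) (S : Matrix (Fin d) (Fin d) ℝ)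
    (x : Fin d → ℝ) : gaussPDF m S x = gaussPDF 0 S (x - m) := by
  simp only [gaussPDF, sub_zero]

theorem integral_gaussPDF_zero_sub_mulVec_mul_gaussPDF_zero {d e : ℕ}
    {P : Matrix (Fin d) (Fin d) ℝ} {S : Matrix (Fin e) (Fin e) ℝ} (hP : P.PosDef) (hS : S.PosDef)
    (L : Matrix (Fin d) (Fin e) ℝ) (v : Fin d → ℝ) :
    ∫ y, gaussPDF 0 P (v - L *ᵥ y) * gaussPDF 0 S y = gaussPDF 0 (P + L * S * Lᵀ) v := by
  set R := S⁻¹ + Lᵀ * P⁻¹ * L with hRdef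
  have hR : R.PosDef := hS.inv_add_transpose_mul_inv_mul hP L
  have hsquare : ∀ y, -(1 / 2) * ((v - L *ᵥ y) ⬝ᵥ (P⁻¹ *ᵥ (v - L *ᵥ y))) +
      -(1 / 2) * (y ⬝ᵥ (S⁻¹ *ᵥ y)) =
      -(1 / 2) * (v ⬝ᵥ (P⁻¹ *ᵥ v)) +
        (-(1 / 2) * (y ⬝ᵥ (R *ᵥ y)) + (Lᵀ *ᵥ (P⁻¹ *ᵥ v)) ⬝ᵥ y) := by
    intro y
    have hcross : (L *ᵥ y) ⬝ᵥ (P⁻¹ *ᵥ v) = (Lᵀ *ᵥ (P⁻¹ *ᵥ v)) ⬝ᵥ y := by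
      rw [dotProduct_comm (Lᵀ *ᵥ _), dotProduct_transpose_mulVec, dotProduct_comm]
    rw [hP.inv.isSymm.sub_dotProduct_mulVec_sub, hcross, mulVec_dotProduct_mulVec_mulVec, hRdef,
      add_mulVec, dotProduct_add]
    ring
  have hpoint : ∀ y, gaussPDF 0 P (v - L *ᵥ y) * gaussPDF 0 S y =
      (2 * π) ^ (-(d : ℝ) / 2) * P.det ^ (-(1 : ℝ) / 2) *
          ((2 * π) ^ (-(e : ℝ) / 2) * S.det ^ (-(1 : ℝ) / 2)) *
          exp (-(1 / 2) * (v ⬝ᵥ (P⁻¹ *ᵥ v))) *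
        exp (-(1 / 2) * (y ⬝ᵥ (R *ᵥ y)) + (Lᵀ *ᵥ (P⁻¹ *ᵥ v)) ⬝ᵥ y) := by
    intro y
    simp only [gaussPDF, sub_zero]
    rw [mul_mul_mul_comm, ← exp_add, hsquare, exp_add]
    ring
  have hwoodbury : -(1 / 2) * (v ⬝ᵥ (P⁻¹ *ᵥ v)) +
      (1 / 2) * ((Lᵀ *ᵥ (P⁻¹ *ᵥ v)) ⬝ᵥ (R⁻¹ *ᵥ (Lᵀ *ᵥ (P⁻¹ *ᵥ v)))) =
      -(1 / 2) * (v ⬝ᵥ ((P⁻¹ - P⁻¹ * L * R⁻¹ * Lᵀ * P⁻¹) *ᵥ v)) := by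
    rw [mulVec_mulVec, mulVec_dotProduct_mulVec_mulVec, sub_mulVec, dotProduct_sub,
      transpose_mul, transpose_transpose, hP.inv.isSymm.eq]
    simp only [Matrix.mul_assoc]
    ring
  simp_rw [hpoint]
  rw [integral_const_mul, integral_exp_neg_half_quadratic_add_linear hR, gaussPDF, sub_zero,
    add_mul_mul_inv_eq_sub P L S Lᵀ hP.isUnit hS.isUnit hR.isUnit,
    det_add_mul_mul_transpose hP.det_pos.ne'.isUnit hS.det_pos.ne'.isUnit, ← hwoodbury, exp_add,
    mul_rpow (mul_nonneg hP.det_pos.le hS.det_pos.le) hR.det_pos.le,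
    mul_rpow hP.det_pos.le hS.det_pos.le, Fintype.card_fin, neg_div (2 : ℝ) (e : ℝ),
    rpow_neg (by positivity) ((e : ℝ) / 2)]
  field_simp

theorem integral_gaussPDF_mulVec_mul_gaussPDF {d e : ℕ}
    {P : Matrix (Fin d) (Fin d) ℝ} {S : Matrix (Fin e) (Fin e) ℝ} (hP : P.PosDef) (hS : S.PosDef)
    (L : Matrix (Fin d) (Fin e) ℝ) (μ : Fin e → ℝ) (x : Fin d → ℝ) :
    ∫ y, gaussPDF (L *ᵥ y) P x * gaussPDF μ S y = gaussPDF (L *ᵥ μ) (P + L * S * Lᵀ) x := by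
  calc ∫ y, gaussPDF (L *ᵥ y) P x * gaussPDF μ S y
      = ∫ y, gaussPDF 0 P (x - L *ᵥ μ - L *ᵥ (y - μ)) * gaussPDF 0 S (y - μ) := by
        congr 1 with y
        rw [gaussPDF_eq_gaussPDF_zero_sub _ _ x, gaussPDF_eq_gaussPDF_zero_sub μ, mulVec_sub]
        abel_nf
    _ = ∫ y, gaussPDF 0 P (x - L *ᵥ μ - L *ᵥ y) * gaussPDF 0 S y :=
        integral_sub_right_eq_self (fun y ↦ gaussPDF 0 P (x - L *ᵥ μ - L *ᵥ y) * gaussPDF 0 S y) μ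
    _ = gaussPDF (L *ᵥ μ) (P + L * S * Lᵀ) x := by
        rw [integral_gaussPDF_zero_sub_mulVec_mul_gaussPDF_zero hP hS,
          ← gaussPDF_eq_gaussPDF_zero_sub]

theorem kerKM_eq_gaussPDF {d : ℕ} {S M : Matrix (Fin d) (Fin d) ℝ} (hS : S.PosDef)
    (hM : M.PosDef) {T β : ℝ} (hT : 0 < T) (hβ : 0 < β) (x y : Fin d → ℝ) :
    kerKM S M T β x y =
      gaussPDF (((T • S⁻¹ + M⁻¹)⁻¹ * M⁻¹) *ᵥ y) ((2 * β⁻¹ * T) • (T • S⁻¹ + M⁻¹)⁻¹) x := by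
  set P := T • S⁻¹ + M⁻¹
  set k := β / (2 * T) with hk
  have hP : P.PosDef := (hS.inv.smul hT).add hM.inv
  have hQ : (k • P).PosDef := hP.smul (by positivity)
  have hk_inv : k * (2 * β⁻¹ * T) = 1 := by
    rw [hk]
    field_simp
  -- the last summand does not depend on `z` and cancels against the normalisation
  have hexp : ∀ z, -(β / 2) * ((1 / 2) * (z ⬝ᵥ (S⁻¹ *ᵥ z)) +
      ((z - y) ⬝ᵥ (M⁻¹ *ᵥ (z - y))) / (2 * T)) =
      (-(1 / 2) * (z ⬝ᵥ ((k • P) *ᵥ z)) + ((k • M⁻¹) *ᵥ y) ⬝ᵥ z) +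
        -(k / 2) * (y ⬝ᵥ (M⁻¹ *ᵥ y)) := by
    intro z
    rw [hM.inv.isSymm.sub_dotProduct_mulVec_sub, smul_mulVec, add_mulVec, smul_mulVec,
      smul_mulVec, dotProduct_smul, dotProduct_add, dotProduct_smul, smul_dotProduct,
      smul_eq_mul, smul_eq_mul, smul_eq_mul, ← hM.inv.isSymm.dotProduct_mulVec_comm, hk]
    field_simp
    ring
  have hQinv : (k • P)⁻¹ = (2 * β⁻¹ * T) • P⁻¹ := by
    refine inv_eq_right_inv ?_
    rw [smul_mul_smul_comm, mul_nonsing_inv _ hP.det_pos.ne'.isUnit, hk_inv, one_smul]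
  simp_rw [kerKM, hexp, exp_add _ (-(k / 2) * (y ⬝ᵥ (M⁻¹ *ᵥ y))), integral_mul_const]
  rw [mul_div_mul_right _ _ (exp_pos _).ne', exp_neg_half_quadratic_add_linear_div_integral hQ,
    hQinv, smul_mulVec, ← smul_mulVec, mulVec_mulVec, smul_mul_smul_comm, mul_comm, hk_inv,
    one_smul]

/-- The preconditioned regularized Wasserstein proximal of the Gaussian `ρ_k = N(μ_k, Σ_k)`
for the quadratic potential `V(x) = ½xᵀΣ⁻¹x`, i.e. the measure with density
`x ↦ ∫ K_M(x,y) ρ_k(y) dy`, is the Gaussian `N(μ̃_k, Σ̃_k)` with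
`μ̃_k = (I + TMΣ⁻¹)⁻¹ μ_k` and
`Σ̃_k = 2β⁻¹T(TΣ⁻¹+M⁻¹)⁻¹ + (TΣ⁻¹+M⁻¹)⁻¹M⁻¹Σ_kM⁻¹(TΣ⁻¹+M⁻¹)⁻¹`. -/
theorem prwpo_of_gaussian {d : ℕ}
    (S M Sk : Matrix (Fin d) (Fin d) ℝ) (hS : S.PosDef) (hM : M.PosDef) (hSk : Sk.PosDef)
    (T β : ℝ) (hT : 0 < T) (hβ : 0 < β) (μk : Fin d → ℝ) (x : Fin d → ℝ) :
    (∫ y : Fin d → ℝ, kerKM S M T β x y * gaussPDF μk Sk y) =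
      gaussPDF ((1 + T • (M * S⁻¹))⁻¹ *ᵥ μk)
        ((2 * β⁻¹ * T) • (T • S⁻¹ + M⁻¹)⁻¹ +
          (T • S⁻¹ + M⁻¹)⁻¹ * M⁻¹ * Sk * M⁻¹ * (T • S⁻¹ + M⁻¹)⁻¹) x := by
  have hP : (T • S⁻¹ + M⁻¹).PosDef := (hS.inv.smul hT).add hM.inv
  have hmean : (1 + T • (M * S⁻¹))⁻¹ = (T • S⁻¹ + M⁻¹)⁻¹ * M⁻¹ := by
    rw [← Matrix.mul_inv_rev, mul_add, mul_smul_comm, mul_nonsing_inv _ hM.det_pos.ne'.isUnit,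
      add_comm]
  have htranspose : ((T • S⁻¹ + M⁻¹)⁻¹ * M⁻¹)ᵀ = M⁻¹ * (T • S⁻¹ + M⁻¹)⁻¹ := by
    rw [transpose_mul, hM.inv.isSymm.eq, hP.inv.isSymm.eq]
  simp_rw [kerKM_eq_gaussPDF hS hM hT hβ x]
  rw [integral_gaussPDF_mulVec_mul_gaussPDF (hP.inv.smul (by positivity)) hSk, hmean, htranspose]
  simp only [Matrix.mul_assoc]
end

section
/- Let V : ℝ^d → ℝ be differentiable and μ-strongly convex relative to M^{-1} (meaning ⟨∇V(x) - ∇V(y), x - y⟩ ≥ μ (x-y)ᵀ M^{-1} (x-y) for all x,y), minimized at x̂. Let x₁,...,x_N ∈ ℝ^d, X = [x₁ ... x_N] ∈ ℝ^{d×N}, X̂ = x̂𝟏_Nᵀ, P any row-stochastic N×N matrix, T > 0, and Δ = -½ M ∇V(X) + (1/(2T))(X - X Pᵀ), where ∇V(X) applies ∇V columnwise. Then ⟨Δ, M^{-1}(X - X̂)⟩_Frob ≤ ‖X - X̂‖_{2,M} ( -μ/2 · ‖X - X̂‖_{2,M} + (1+√N)/(2T) · ‖X - (1/N) X 𝟏_N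 𝟏_Nᵀ‖_{2,M} ), where ‖A‖_{2,M}² = Tr(Aᵀ M^{-1} A). -/
open Matrix
open scoped RealInnerProductSpace

/-!
Write `Y = X - X̂` and `Z = X - X̄`, where `X̄` repeats the mean column. Since `M` cancels
against `M⁻¹`, the gradient term is `∑ⱼ ⟨∇V(xⱼ) - ∇V(x̂), xⱼ - x̂⟩ ≥ μ ‖Y‖²`, by strong
convexity and `∇V(x̂) = 0`. A row-stochastic `P` fixes every matrix with constant rows, so
`X - XPᵀ = Z - ZPᵀ`; Cauchy–Schwarz for the `M⁻¹`-weighted Frobenius product together with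
`‖ZPᵀ‖ ≤ ‖Z‖ ‖P‖_F` and `‖P‖_F² ≤ N` bounds the diffusion term by `(1 + √N) ‖Z‖ ‖Y‖`.
Writing `M⁻¹ = BᵀB` reduces the weighted estimates to unweighted ones.
-/

/-- Scaled Frobenius norm `‖A‖_{2,M} = √Tr(Aᵀ M⁻¹ A)`. -/
noncomputable def scaledNorm {d N : ℕ} (M : Matrix (Fin d) (Fin d) ℝ)
    (A : Matrix (Fin d) (Fin N) ℝ) : ℝ :=
  Real.sqrt (Aᵀ * M⁻¹ * A).trace

namespace Matrix

variable {m n p : Type*} [Fintype m] [Fintype n] [Fintype p]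

lemma trace_transpose_mul_eq_sum (A B : Matrix m n ℝ) :
    (Aᵀ * B).trace = ∑ i, ∑ j, A i j * B i j := by
  simp only [trace, diag, mul_apply, transpose_apply]
  exact Finset.sum_comm

lemma trace_transpose_mul_le (A B : Matrix m n ℝ) :
    (Aᵀ * B).trace ≤ √(Aᵀ * A).trace * √(Bᵀ * B).trace := by
  simp only [trace_transpose_mul_eq_sum, ← sq, ← Finset.sum_product']
  exact Real.sum_mul_le_sqrt_mul_sqrt _ _ _

lemma trace_transpose_mul_self_mul_le (A : Matrix m n ℝ) (R : Matrix n p ℝ) :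
    ((A * R)ᵀ * (A * R)).trace ≤ (Aᵀ * A).trace * (Rᵀ * R).trace := by
  simp only [trace_transpose_mul_eq_sum, ← sq]
  calc ∑ i, ∑ k, (A * R) i k ^ 2
      ≤ ∑ i, ∑ k, (∑ j, A i j ^ 2) * ∑ j, R j k ^ 2 := by
        gcongr with i _ k _
        exact Finset.sum_mul_sq_le_sq_mul_sq _ _ _
    _ = (∑ i, ∑ j, A i j ^ 2) * ∑ j, ∑ k, R j k ^ 2 := by
        simp only [← Finset.mul_sum, ← Finset.sum_mul]
        rw [Finset.sum_comm (γ := p)]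

namespace PosSemidef

variable {Q : Matrix m m ℝ}

lemma exists_eq_transpose_mul_self (hQ : Q.PosSemidef) : ∃ B : Matrix m m ℝ, Q = Bᵀ * B := by
  classical
  open scoped MatrixOrder in
  obtain ⟨B, rfl⟩ := CStarAlgebra.nonneg_iff_eq_star_mul_self.mp hQ.nonneg
  exact ⟨B, rfl⟩

lemma trace_transpose_mul_mul_nonneg (hQ : Q.PosSemidef) (A : Matrix m n ℝ) :
    0 ≤ (Aᵀ * Q * A).trace :=
  (hQ.conjTranspose_mul_mul_same A).trace_nonneg

lemma trace_transpose_mul_mul_le (hQ : Q.PosSemidef) (A C : Matrix m n ℝ) :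
    (Aᵀ * (Q * C)).trace ≤ √(Aᵀ * Q * A).trace * √(Cᵀ * Q * C).trace := by
  obtain ⟨B, rfl⟩ := hQ.exists_eq_transpose_mul_self
  simpa only [transpose_mul, Matrix.mul_assoc] using trace_transpose_mul_le (B * A) (B * C)

lemma trace_transpose_mul_mul_mul_le (hQ : Q.PosSemidef) (A : Matrix m n ℝ) (R : Matrix n p ℝ) :
    ((A * R)ᵀ * Q * (A * R)).trace ≤ (Aᵀ * Q * A).trace * (Rᵀ * R).trace := by
  obtain ⟨B, rfl⟩ := hQ.exists_eq_transpose_mul_self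
  simpa only [transpose_mul, Matrix.mul_assoc] using trace_transpose_mul_self_mul_le (B * A) R

end PosSemidef

lemma trace_mul_transpose_le_card_of_mem_rowStochastic [DecidableEq n] {P : Matrix n n ℝ}
    (hP : P ∈ rowStochastic ℝ n) : (P * Pᵀ).trace ≤ Fintype.card n :=
  calc (P * Pᵀ).trace = ∑ i, ∑ j, P i j * P i j := by
        simp only [trace, diag, mul_apply, transpose_apply]
    _ ≤ ∑ i, ∑ j, P i j := by
        gcongr with i _ j _
        exact mul_le_of_le_one_left (nonneg_of_mem_rowStochastic hP)
          (le_one_of_mem_rowStochastic hP)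
    _ = Fintype.card n := by simp [sum_row_of_mem_rowStochastic hP]

lemma of_const_mul_transpose_of_mem_rowStochastic {ι : Type*} [DecidableEq n] {P : Matrix n n ℝ}
    (hP : P ∈ rowStochastic ℝ n) (c : ι → ℝ) :
    (of fun i (_ : n) => c i) * Pᵀ = of fun i (_ : n) => c i := by
  ext i j
  simp [mul_apply, ← Finset.mul_sum, sum_row_of_mem_rowStochastic hP]

end Matrix

section scaledNorm

variable {d N : ℕ} {M : Matrix (Fin d) (Fin d) ℝ}

lemma sq_scaledNorm (hM : M⁻¹.PosSemidef) (A : Matrix (Fin d) (Fin N) ℝ) :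
    scaledNorm M A ^ 2 = (Aᵀ * M⁻¹ * A).trace :=
  Real.sq_sqrt (hM.trace_transpose_mul_mul_nonneg A)

lemma trace_transpose_mul_inv_mul_le_scaledNorm (hM : M⁻¹.PosSemidef)
    (A B : Matrix (Fin d) (Fin N) ℝ) :
    (Aᵀ * (M⁻¹ * B)).trace ≤ scaledNorm M A * scaledNorm M B :=
  hM.trace_transpose_mul_mul_le A B

lemma scaledNorm_mul_le (hM : M⁻¹.PosSemidef) (A : Matrix (Fin d) (Fin N) ℝ)
    (R : Matrix (Fin N) (Fin N) ℝ) :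
    scaledNorm M (A * R) ≤ scaledNorm M A * √(Rᵀ * R).trace := by
  rw [scaledNorm, scaledNorm, ← Real.sqrt_mul (hM.trace_transpose_mul_mul_nonneg A)]
  exact Real.sqrt_le_sqrt (hM.trace_transpose_mul_mul_mul_le A R)

lemma trace_sub_mul_transpose_le_scaledNorm (hM : M⁻¹.PosSemidef)
    {P : Matrix (Fin N) (Fin N) ℝ} (hP : P ∈ rowStochastic ℝ (Fin N))
    (X Y : Matrix (Fin d) (Fin N) ℝ) (c : Fin d → ℝ) :
    ((X - X * Pᵀ)ᵀ * (M⁻¹ * Y)).trace ≤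
      (1 + √N) * (scaledNorm M (X - of fun i (_ : Fin N) => c i) * scaledNorm M Y) := by
  set Z := X - of fun i (_ : Fin N) => c i with hZdef
  have hZ : X - X * Pᵀ = Z + Z * -Pᵀ := by
    rw [Matrix.mul_neg, ← sub_eq_add_neg, hZdef, Matrix.sub_mul,
      of_const_mul_transpose_of_mem_rowStochastic hP]
    abel
  have hZP : scaledNorm M (Z * -Pᵀ) ≤ scaledNorm M Z * √N := by
    refine (scaledNorm_mul_le hM Z _).trans (mul_le_mul_of_nonneg_left ?_ (Real.sqrt_nonneg _))
    simpa using Real.sqrt_le_sqrt (trace_mul_transpose_le_card_of_mem_rowStochastic hP)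
  have hY : 0 ≤ scaledNorm M Y := Real.sqrt_nonneg _
  rw [hZ, transpose_add, Matrix.add_mul, trace_add]
  calc _ ≤ scaledNorm M Z * scaledNorm M Y + scaledNorm M (Z * -Pᵀ) * scaledNorm M Y :=
        add_le_add (trace_transpose_mul_inv_mul_le_scaledNorm hM Z Y)
          (trace_transpose_mul_inv_mul_le_scaledNorm hM (Z * -Pᵀ) Y)
    _ ≤ scaledNorm M Z * scaledNorm M Y + scaledNorm M Z * √N * scaledNorm M Y := by gcongr
    _ = _ := by ring

end scaledNorm

lemma mul_trace_transpose_mul_mul_le_of_forall_column {ι n : Type*} [Fintype ι] [Fintype n]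
    (g : EuclideanSpace ℝ ι → EuclideanSpace ℝ ι) (Q : Matrix ι ι ℝ) (μ : ℝ)
    (x₀ : EuclideanSpace ℝ ι)
    (hg : ∀ x, μ * ((fun i => x i - x₀ i) ⬝ᵥ (Q *ᵥ fun i => x i - x₀ i)) ≤ ⟪g x, x - x₀⟫)
    (X : Matrix ι n ℝ) :
    μ * ((X - of fun i (_ : n) => x₀ i)ᵀ * Q * (X - of fun i (_ : n) => x₀ i)).trace ≤
      ((of fun i j => g (WithLp.toLp 2 fun k => X k j) i)ᵀ *
        (X - of fun i (_ : n) => x₀ i)).trace := by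
  simp only [trace, diag, Finset.mul_sum]
  refine Finset.sum_le_sum fun j _ => (le_of_eq ?_).trans
    ((hg (WithLp.toLp 2 fun k => X k j)).trans (le_of_eq ?_))
  · rw [Matrix.mul_assoc]
    simp [mul_apply, dotProduct, mulVec]
  · simp [mul_apply, PiLp.inner_apply, mul_comm]

theorem contraction_diffusion_inequality_general {d N : ℕ}
    (M : Matrix (Fin d) (Fin d) ℝ) (hM : M.PosDef)
    (V : EuclideanSpace ℝ (Fin d) → ℝ)
    (μ T : ℝ) (hT : 0 < T)
    (hconv : ∀ x y : EuclideanSpace ℝ (Fin d),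
      ⟪gradient V x - gradient V y, x - y⟫ ≥
        μ * ((fun i => x i - y i) ⬝ᵥ (M⁻¹ *ᵥ fun i => x i - y i)))
    (xhat : EuclideanSpace ℝ (Fin d)) (hmin : ∀ y, V xhat ≤ V y)
    (P : Matrix (Fin N) (Fin N) ℝ)
    (hPpos : ∀ i j, 0 ≤ P i j) (hProw : ∀ i, ∑ j, P i j = 1)
    (X : Matrix (Fin d) (Fin N) ℝ) :
    (((-(1 / 2 : ℝ)) • (M * Matrix.of fun i j => gradient V (WithLp.toLp 2 fun k => X k j) i) +
        (1 / (2 * T)) • (X - X * Pᵀ))ᵀ *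
      (M⁻¹ * (X - Matrix.of fun i (_ : Fin N) => xhat i))).trace ≤
    scaledNorm M (X - Matrix.of fun i (_ : Fin N) => xhat i) *
      (-(μ / 2) * scaledNorm M (X - Matrix.of fun i (_ : Fin N) => xhat i) +
        (1 + Real.sqrt N) / (2 * T) *
          scaledNorm M (X - Matrix.of fun i (_ : Fin N) => (1 / (N : ℝ)) * ∑ k, X i k)) := by
  set Y := X - of fun i (_ : Fin N) => xhat i
  set Z := X - of fun i (_ : Fin N) => (1 / (N : ℝ)) * ∑ k, X i k
  set G := of fun i j => gradient V (WithLp.toLp 2 fun k => X k j) i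
  have hMinv : M⁻¹.PosSemidef := hM.inv.posSemidef
  have hgrad : gradient V xhat = 0 := by
    simp [gradient, IsLocalMin.fderiv_eq_zero (.of_forall hmin)]
  have hcontract : μ * scaledNorm M Y ^ 2 ≤ ((M * G)ᵀ * (M⁻¹ * Y)).trace := by
    have hMT : Mᵀ = M := hM.isHermitian.eq
    rw [sq_scaledNorm hMinv, transpose_mul, hMT, Matrix.mul_assoc Gᵀ,
      mul_nonsing_inv_cancel_left M Y hM.det_pos.ne'.isUnit]
    exact mul_trace_transpose_mul_mul_le_of_forall_column _ _ _ _
      (fun x => by simpa [hgrad] using hconv x xhat) X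
  have hdiffuse := trace_sub_mul_transpose_le_scaledNorm hMinv
    (mem_rowStochastic_iff_sum.2 ⟨hPpos, hProw⟩) X Y fun i => 1 / (N : ℝ) * ∑ k, X i k
  calc _ = -(1 / 2) * ((M * G)ᵀ * (M⁻¹ * Y)).trace +
        1 / (2 * T) * ((X - X * Pᵀ)ᵀ * (M⁻¹ * Y)).trace := by
        simp only [transpose_add, transpose_smul, Matrix.add_mul, Matrix.smul_mul, trace_add,
          trace_smul, smul_eq_mul]
    _ ≤ -(1 / 2) * (μ * scaledNorm M Y ^ 2) +
        1 / (2 * T) * ((1 + √N) * (scaledNorm M Z * scaledNorm M Y)) :=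
        add_le_add (by linarith) (mul_le_mul_of_nonneg_left hdiffuse (by positivity))
    _ = _ := by ring

/-- Contraction–diffusion inequality: if `V` is differentiable and `μ`-strongly convex
relative to `M⁻¹` (i.e. `⟨∇V(x) - ∇V(y), x-y⟩ ≥ μ (x-y)ᵀ M⁻¹ (x-y)`), minimized at `x̂`,
`P` is row-stochastic and `Δ = -½ M ∇V(X) + (1/(2T))(X - X Pᵀ)`, then
`⟨Δ, M⁻¹(X - X̂)⟩_F ≤ ‖X - X̂‖_{2,M} (-μ/2 ‖X - X̂‖_{2,M}
  + (1+√N)/(2T) ‖X - (1/N) X 𝟏𝟏ᵀ‖_{2,M})`. -/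
theorem contraction_diffusion_inequality {d N : ℕ} (hN : 0 < N)
    (M : Matrix (Fin d) (Fin d) ℝ) (hM : M.PosDef)
    (V : EuclideanSpace ℝ (Fin d) → ℝ) (hV : Differentiable ℝ V)
    (μ T : ℝ) (hμ : 0 < μ) (hT : 0 < T)
    (hconv : ∀ x y : EuclideanSpace ℝ (Fin d),
      ⟪gradient V x - gradient V y, x - y⟫ ≥
        μ * ((fun i => x i - y i) ⬝ᵥ (M⁻¹ *ᵥ fun i => x i - y i)))
    (xhat : EuclideanSpace ℝ (Fin d)) (hmin : ∀ y, V xhat ≤ V y)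
    (P : Matrix (Fin N) (Fin N) ℝ)
    (hPpos : ∀ i j, 0 ≤ P i j) (hProw : ∀ i, ∑ j, P i j = 1)
    (X : Matrix (Fin d) (Fin N) ℝ) :
    (((-(1 / 2 : ℝ)) • (M * Matrix.of fun i j => gradient V (WithLp.toLp 2 fun k => X k j) i) +
        (1 / (2 * T)) • (X - X * Pᵀ))ᵀ *
      (M⁻¹ * (X - Matrix.of fun i (_ : Fin N) => xhat i))).trace ≤
    scaledNorm M (X - Matrix.of fun i (_ : Fin N) => xhat i) *
      (-(μ / 2) * scaledNorm M (X - Matrix.of fun i (_ : Fin N) => xhat i) +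
        (1 + Real.sqrt N) / (2 * T) *
          scaledNorm M (X - Matrix.of fun i (_ : Fin N) => (1 / (N : ℝ)) * ∑ k, X i k)) :=
  contraction_diffusion_inequality_general M hM V μ T hT hconv xhat hmin P hPpos hProw X
end
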